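/- arXiv:2410.17359 — 2 statements merged into one kernel-verified Lean document; each statement's English description precedes it below -/
import Mathlib

section
/- Let α > 0 and u ∈ C⁴([0,1]) satisfy α u'''' + u = 1 on (0,1) with u(0) = u(1) = 0 and u''(0) = u''(1) = 0. Set ω = (4α)^{-1/4} and define v(x) = 1 − cosh(ωx)cos(ωx) + (sinh ω/(cosh ω + cos ω)) sinh(ωx)cos(ωx) − (sin ω/(cosh ω + cos ω)) cosh(ωx)sin(ωx). Then v satisfies α v'''' + v = 1 on (0,1), v(0) = v(1) = 0, and v''(0) = v''(1) = 0. -/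
open Real

noncomputable def Fm (ω e a b c d : ℝ) : ℝ → ℝ := fun x =>
  e + a * (Real.cosh (ω*x) * Real.cos (ω*x)) + b * (Real.sinh (ω*x) * Real.cos (ω*x))
    + c * (Real.cosh (ω*x) * Real.sin (ω*x)) + d * (Real.sinh (ω*x) * Real.sin (ω*x))

lemma Fm_hasDerivAt (ω e a b c d x : ℝ) :
    HasDerivAt (Fm ω e a b c d) (Fm ω 0 (ω*(b+c)) (ω*(a+d)) (ω*(d-a)) (ω*(c-b)) x) x := by
  have hl : HasDerivAt (fun y : ℝ => ω * y) ω x := by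
    simpa using (hasDerivAt_id x).const_mul ω
  have hch := hl.cosh
  have hsh := hl.sinh
  have hco := hl.cos
  have hsi := hl.sin
  have h := (((((hch.mul hco).const_mul a).const_add e).add
      ((hsh.mul hco).const_mul b)).add ((hch.mul hsi).const_mul c)).add
      ((hsh.mul hsi).const_mul d)
  refine (h.congr_deriv ?_).congr_of_eventuallyEq (Filter.Eventually.of_forall fun y => ?_)
  · simp [Fm]
    ring
  · simp [Fm]

lemma Fm_deriv (ω e a b c d : ℝ) :
    deriv (Fm ω e a b c d) = Fm ω 0 (ω*(b+c)) (ω*(a+d)) (ω*(d-a)) (ω*(c-b)) :=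
  funext fun x => (Fm_hasDerivAt ω e a b c d x).deriv

theorem stmt_16 (α : ℝ) (hα : 0 < α) (u : ℝ → ℝ)
    (hu : ContDiff ℝ 4 u)
    (hueq : ∀ x ∈ Set.Ioo (0 : ℝ) 1, α * iteratedDeriv 4 u x + u x = 1)
    (hu0 : u 0 = 0) (hu1 : u 1 = 0)
    (hu''0 : iteratedDeriv 2 u 0 = 0) (hu''1 : iteratedDeriv 2 u 1 = 0)
    (ω : ℝ) (hω : ω = (4 * α) ^ (-(1 : ℝ) / 4))
    (v : ℝ → ℝ)
    (hv : ∀ x : ℝ, v x = 1 - cosh (ω * x) * cos (ω * x)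
      + (sinh ω / (cosh ω + cos ω)) * sinh (ω * x) * cos (ω * x)
      - (sin ω / (cosh ω + cos ω)) * cosh (ω * x) * sin (ω * x)) :
    (∀ x ∈ Set.Ioo (0 : ℝ) 1, α * iteratedDeriv 4 v x + v x = 1) ∧
    v 0 = 0 ∧ v 1 = 0 ∧ iteratedDeriv 2 v 0 = 0 ∧ iteratedDeriv 2 v 1 = 0 := by
  set D := cosh ω + cos ω with hD
  have hDpos : 0 < D := by
    have h1 : 1 < cosh ω := by
      apply Real.one_lt_cosh.2
      rw [hω]
      positivity
    nlinarith [Real.neg_one_le_cos ω]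
  set A := sinh ω / D with hA
  set B := sin ω / D with hB
  have hveq : v = Fm ω 1 (-1) A (-B) 0 := funext fun x => by
    rw [hv x, Fm]; ring
  have hω4 : 4 * α * ω ^ 4 = 1 := by
    rw [hω]
    rw [← Real.rpow_natCast ((4*α) ^ (-(1:ℝ)/4)) 4, ← Real.rpow_mul (by positivity)]
    norm_num
    rw [Real.rpow_neg_one]
    field_simp
  have h2' : iteratedDeriv 2 v = Fm ω 0 (ω*((ω*(-1+0)) + (ω*(0 - -1)))) (ω*((ω*(A + -B)) + (ω*(-B - A)))) (ω*((ω*(-B - A)) - (ω*(A + -B)))) (ω*((ω*(0 - -1)) - (ω*(-1+0)))) := by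
    rw [hveq, iteratedDeriv_succ, iteratedDeriv_one, Fm_deriv, Fm_deriv]
  have h4 : iteratedDeriv 4 v = deriv (deriv (iteratedDeriv 2 v)) := by
    rw [iteratedDeriv_succ, iteratedDeriv_succ]
  refine ⟨?_, ?_, ?_, ?_, ?_⟩
  · intro x hx
    rw [h4, h2', Fm_deriv, Fm_deriv, Fm, hv x]
    rw [hA, hB] at *
    linear_combination (cosh (ω*x) * cos (ω*x) - sinh ω / D * (sinh (ω*x) * cos (ω*x))
      + sin ω / D * (cosh (ω*x) * sin (ω*x))) * hω4
  · rw [hv 0]; simp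
  · rw [hv 1]
    rw [hA, hB] at *
    have hc := Real.cosh_sq_sub_sinh_sq ω
    have hs := Real.sin_sq_add_cos_sq ω
    field_simp
    linear_combination (-cos ω) * hc + (-cosh ω) * hs
  · rw [h2', Fm]; simp
  · rw [h2', Fm]
    simp only [mul_one]
    rw [hA, hB] at *
    field_simp
    ring
end

section
/- Let H be a real Hilbert space, α > 0, ρ ∈ (0, α/2), z* ∈ H, and suppose sequences (z_k), (e_k), (g_k), (h_k) in H satisfy z_{k+1} = z_k + ρ(e_k + g_k) and the identity ⟨e_k + g_k, z* − z_k⟩ = ‖h_k‖² + (α/2)‖g_k‖² + (α/2)‖e_k‖² for all k, with ‖h_k‖ ≥ 0. Then ‖z_{k+1} − z*‖² ≤ ‖z_k − z*‖² + (2ρ² − αρ)(‖e_k‖² + ‖g_k‖²), and in particular the sequence ‖z_k − z*‖ is nonincreasing. -/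
theorem stmt_19 {H : Type*} [NormedAddCommGroup H] [InnerProductSpace ℝ H] [CompleteSpace H]
    (α ρ : ℝ) (hα : 0 < α) (hρ : ρ ∈ Set.Ioo 0 (α / 2))
    (zstar : H) (z e g h : ℕ → H)
    (hupd : ∀ k, z (k + 1) = z k + ρ • (e k + g k))
    (hid : ∀ k, (inner ℝ (e k + g k) (zstar - z k) : ℝ)
      = ‖h k‖ ^ 2 + α / 2 * ‖g k‖ ^ 2 + α / 2 * ‖e k‖ ^ 2) :
    (∀ k, ‖z (k + 1) - zstar‖ ^ 2 ≤ ‖z k - zstar‖ ^ 2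
      + (2 * ρ ^ 2 - α * ρ) * (‖e k‖ ^ 2 + ‖g k‖ ^ 2)) ∧
    (∀ k, ‖z (k + 1) - zstar‖ ≤ ‖z k - zstar‖) := by
  obtain ⟨hρ0, hρα⟩ := hρ
  have main : ∀ k, ‖z (k + 1) - zstar‖ ^ 2 ≤ ‖z k - zstar‖ ^ 2
      + (2 * ρ ^ 2 - α * ρ) * (‖e k‖ ^ 2 + ‖g k‖ ^ 2) := by
    intro k
    have hexp : ‖z (k + 1) - zstar‖ ^ 2
        = ‖z k - zstar‖ ^ 2 + 2 * ρ * (inner ℝ (e k + g k) (z k - zstar) : ℝ)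
          + ρ ^ 2 * ‖e k + g k‖ ^ 2 := by
      rw [hupd k]
      have : z k + ρ • (e k + g k) - zstar = (z k - zstar) + ρ • (e k + g k) := by abel
      rw [this, @norm_add_sq_real, norm_smul, real_inner_smul_right, real_inner_comm]
      simp [mul_pow]
      ring
    have hinner : (inner ℝ (e k + g k) (z k - zstar) : ℝ)
        = -(‖h k‖ ^ 2 + α / 2 * ‖g k‖ ^ 2 + α / 2 * ‖e k‖ ^ 2) := by
      rw [← hid k, ← inner_neg_right]
      congr 1; abel
    have hsum : ‖e k + g k‖ ^ 2 ≤ 2 * (‖e k‖ ^ 2 + ‖g k‖ ^ 2) := by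
      nlinarith [norm_add_le (e k) (g k), norm_nonneg (e k), norm_nonneg (g k),
        sq_nonneg (‖e k‖ - ‖g k‖), sq_abs (‖e k‖ + ‖g k‖),
        abs_of_nonneg (norm_nonneg (e k + g k)),
        pow_le_pow_left₀ (norm_nonneg (e k + g k)) (norm_add_le (e k) (g k)) 2]
    rw [hexp, hinner]
    nlinarith [sq_nonneg (‖h k‖), sq_nonneg ρ]
  refine ⟨main, fun k => ?_⟩
  have hterm : (2 * ρ ^ 2 - α * ρ) * (‖e k‖ ^ 2 + ‖g k‖ ^ 2) ≤ 0 := by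
    apply mul_nonpos_of_nonpos_of_nonneg
    · nlinarith
    · positivity
  have := main k
  have hsq : ‖z (k + 1) - zstar‖ ^ 2 ≤ ‖z k - zstar‖ ^ 2 := by linarith
  nlinarith [norm_nonneg (z (k+1) - zstar), norm_nonneg (z k - zstar)]
end
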